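/- Let α > 0, λ ≠ 0, δ ∈ ℝ, ν = δ/2 − 1, z₀ > 0, θ = α/2, A = α⁴(δ−1)(δ−3)/128, B = λ²/8, and V(t,q) = A/q² + Bq². Then the function η*(t,q) = (4λ/(α² z₀^ν)) · e^{λt/2}/(e^{λt}−1) · I_ν(4λ z₀ e^{λt/2} q/(α²(e^{λt}−1))) · q^{1/2} · exp(λq²/α² − (2λ/α²)(z₀² + e^{λt}q²)/(e^{λt}−1)) satisfies the dual equation −θ² ∂η*/∂t = −(θ⁴/2) ∂²η*/∂q² + V η* on (0,∞) × (0,∞). -/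

import Mathlib

/-!
Write `η*(t, q) = K √c(t) · w(c(t) q) · exp (p(t) q² + r(t))`, where
`w(y) = 2^ν √y I_ν(y) = y^(ν+1/2) g(y²/4)` and `g(u) = ∑ uⁿ / (n! Γ(n+ν+1))` is entire with
`u g'' + (ν+1) g' = g`, so that `w` solves the Liouville normal form
`w'' = (1 + (ν² - 1/4)/y²) w` of Bessel's equation. Substitute the ansatz into
`-s ∂ₜη = -(s²/2) ∂²_q η + (s²κ/(2q²) + Bq²) η` with `κ = ν² - 1/4` and eliminate `w''`: the
coefficients of `w` and `w'` vanish as soon as `c' = 2spc`, `s p' = 2s²p² - B` and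
`r' = sc²/2` (then also `(√c)' = sp√c`). For `s = θ² = α²/4` one has `A = s²κ/2`, and
`c = 2λz₀/(α² sinh(λt/2))`, `p = -(λ/α²) coth(λt/2)`, `r = -(λz₀²/α²)(coth(λt/2) - 1)`
satisfy these Riccati equations.
-/

open Real

/-- The (real) modified Bessel function of the first kind. -/
noncomputable def besselI (ν : ℝ) (x : ℝ) : ℝ :=
  (x / 2) ^ ν * ∑' n : ℕ, (x ^ 2 / 4) ^ n / ((Nat.factorial n : ℝ) * Real.Gamma ((n : ℝ) + ν + 1))

open Filter Topology

def HasInfiniteRadius (d : ℕ → ℝ) : Prop :=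
  ∀ r : ℝ, 0 ≤ r → Summable fun n => |d n| * r ^ n

def derivCoeff (d : ℕ → ℝ) (n : ℕ) : ℝ := (n + 1) * d (n + 1)

noncomputable def powerSum (d : ℕ → ℝ) (x : ℝ) : ℝ := ∑' n, d n * x ^ n

section PowerSeries

variable {d : ℕ → ℝ}

theorem HasInfiniteRadius.summable (hd : HasInfiniteRadius d) (x : ℝ) :
    Summable fun n => d n * x ^ n :=
  .of_abs <| by simpa only [abs_mul, abs_pow] using hd |x| (abs_nonneg x)

theorem hasInfiniteRadius_derivCoeff (hd : HasInfiniteRadius d) :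
    HasInfiniteRadius (derivCoeff d) := by
  intro r hr
  have hR : 0 < r + 1 := by linarith
  have hsum : Summable fun n => |d (n + 1)| * (2 * (r + 1)) ^ (n + 1) / (r + 1) :=
    ((summable_nat_add_iff 1).2 (hd _ (by positivity))).div_const _
  refine hsum.of_nonneg_of_le (fun n => by positivity) fun n => ?_
  have h2 : (n : ℝ) + 1 ≤ 2 ^ (n + 1) := by exact_mod_cast Nat.lt_two_pow_self.le
  calc |derivCoeff d n| * r ^ n = (n + 1) * |d (n + 1)| * r ^ n := by
        rw [derivCoeff, abs_mul, abs_of_nonneg (by positivity)]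
    _ ≤ 2 ^ (n + 1) * |d (n + 1)| * (r + 1) ^ n := by gcongr; linarith
    _ = _ := by rw [mul_pow]; field_simp; ring

theorem HasInfiniteRadius.hasDerivAt (hd : HasInfiniteRadius d) (x : ℝ) :
    HasDerivAt (powerSum d) (powerSum (derivCoeff d) x) x := by
  set R := |x| + 1
  have hx : x ∈ Metric.ball (0 : ℝ) R := by simp [R]
  have hu : Summable fun n : ℕ => n * |d n| * R ^ (n - 1) := by
    refine (summable_nat_add_iff 1).1
      ((hasInfiniteRadius_derivCoeff hd R (by positivity)).congr fun n => ?_)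
    rw [derivCoeff, abs_mul, abs_of_nonneg (by positivity)]
    push_cast
    ring
  have hbound : ∀ n, ∀ y ∈ Metric.ball (0 : ℝ) R,
      ‖d n * (n * y ^ (n - 1))‖ ≤ n * |d n| * R ^ (n - 1) := by
    intro n y hy
    rw [mem_ball_zero_iff, norm_eq_abs] at hy
    rw [norm_eq_abs, abs_mul, abs_mul, abs_pow, Nat.abs_cast]
    have := pow_le_pow_left₀ (abs_nonneg y) hy.le (n - 1)
    calc |d n| * (n * |y| ^ (n - 1)) ≤ |d n| * (n * R ^ (n - 1)) := by gcongr
      _ = _ := by ring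
  have key := hasDerivAt_tsum_of_isPreconnected hu Metric.isOpen_ball
    (convex_ball (0 : ℝ) R).isPreconnected (fun n y _ => (hasDerivAt_pow n y).const_mul (d n))
    hbound (Metric.mem_ball_self (by positivity)) (hd.summable 0) hx
  refine key.congr_deriv ?_
  rw [(Summable.of_norm_bounded hu fun n => hbound n x hx).tsum_eq_zero_add]
  simp only [powerSum, derivCoeff, Nat.cast_zero, zero_mul, mul_zero, zero_add,
    Nat.cast_add, Nat.cast_one, add_tsub_cancel_right]
  exact tsum_congr fun n => by ring

theorem HasInfiniteRadius.hasSum_natCast_mul (hd : HasInfiniteRadius d) (x : ℝ) :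
    HasSum (fun n : ℕ => n * d n * x ^ n) (x * powerSum (derivCoeff d) x) := by
  refine (hasSum_nat_add_iff' 1).1 ?_
  simp only [Finset.range_one, Finset.sum_singleton, Nat.cast_zero, zero_mul, sub_zero]
  refine ((hasInfiniteRadius_derivCoeff hd).summable x).hasSum.mul_left x
    |>.congr_fun fun n => ?_
  rw [derivCoeff]
  push_cast
  ring

variable {b : ℝ}

theorem hasInfiniteRadius_of_succ (hrec : ∀ n : ℕ, (n + 1) * (n + b) * d (n + 1) = d n) :
    HasInfiniteRadius d := by
  intro r hr
  refine summable_of_ratio_norm_eventually_le (r := 1 / 2) (by norm_num) ?_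
  filter_upwards [eventually_ge_atTop ⌈2 * r + |b|⌉₊] with n hn
  have hnb : 2 * r ≤ n + b := by linarith [Nat.ceil_le.1 hn, neg_abs_le b]
  have hmul : 2 * r ≤ (n + 1) * (n + b) := by nlinarith
  have hdn : |d n| = (n + 1) * (n + b) * |d (n + 1)| := by
    rw [← hrec, abs_mul, abs_of_nonneg (by nlinarith)]
  rw [norm_of_nonneg (by positivity), norm_of_nonneg (by positivity), hdn, pow_succ]
  have : 0 ≤ |d (n + 1)| * r ^ n := by positivity
  nlinarith

theorem powerSum_ode_of_succ (hrec : ∀ n : ℕ, (n + 1) * (n + b) * d (n + 1) = d n) (u : ℝ) :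
    u * powerSum (derivCoeff (derivCoeff d)) u + b * powerSum (derivCoeff d) u
      = powerSum d u := by
  have hd := hasInfiniteRadius_of_succ hrec
  have hd' := hasInfiniteRadius_derivCoeff hd
  refine ((hd'.hasSum_natCast_mul u).add ((hd'.summable u).hasSum.mul_left b)).unique ?_
  refine (hd.summable u).hasSum.congr_fun fun n => ?_
  rw [← hrec n, derivCoeff]
  ring

end PowerSeries

noncomputable def besselCoeff (ν : ℝ) (n : ℕ) : ℝ :=
  ((n.factorial : ℝ) * Gamma (n + ν + 1))⁻¹

-- `Gamma` is `0` at its poles, so both sides vanish when `n + ν + 1 = 0`.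
theorem besselCoeff_succ (ν : ℝ) (n : ℕ) :
    (n + 1) * (n + (ν + 1)) * besselCoeff ν (n + 1) = besselCoeff ν n := by
  rw [besselCoeff, besselCoeff, Nat.factorial_succ]
  push_cast
  by_cases h : (n : ℝ) + ν + 1 = 0
  · simp [← add_assoc, h]
  rw [show (n : ℝ) + 1 + ν + 1 = (n + ν + 1) + 1 by ring, Gamma_add_one h]
  field_simp
  ring

theorem hasDerivAt_rpow_mul {h : ℝ → ℝ} {h' x : ℝ} (m : ℝ) (hx : 0 < x)
    (hh : HasDerivAt h h' x) :
    HasDerivAt (fun y => y ^ m * h y) (x ^ m * (m / x * h x + h')) x := by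
  refine ((hasDerivAt_rpow_const (Or.inl hx.ne')).mul hh).congr_deriv ?_
  rw [rpow_sub_one hx.ne']
  field_simp

theorem hasDerivAt_comp_sq_div_four {G G' : ℝ → ℝ} (hG : ∀ u, HasDerivAt G (G' u) u) (x : ℝ) :
    HasDerivAt (fun y => G (y ^ 2 / 4)) (G' (x ^ 2 / 4) * (x / 2)) x := by
  refine (hG _).comp x (((hasDerivAt_pow 2 x).div_const 4).congr_deriv ?_)
  ring

noncomputable def besselLiouville (ν y : ℝ) : ℝ :=
  y ^ (ν + 1 / 2) * powerSum (besselCoeff ν) (y ^ 2 / 4)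

noncomputable def besselLiouvilleDeriv (ν y : ℝ) : ℝ :=
  y ^ (ν + 1 / 2) * ((ν + 1 / 2) / y * powerSum (besselCoeff ν) (y ^ 2 / 4)
    + y / 2 * powerSum (derivCoeff (besselCoeff ν)) (y ^ 2 / 4))

theorem besselLiouville_eq {ν y : ℝ} (hy : 0 < y) :
    besselLiouville ν y = 2 ^ ν * √y * besselI ν y := by
  have hsum : powerSum (besselCoeff ν) (y ^ 2 / 4) = ∑' n : ℕ, (y ^ 2 / 4) ^ n /
      ((Nat.factorial n : ℝ) * Gamma ((n : ℝ) + ν + 1)) :=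
    tsum_congr fun n => by rw [besselCoeff, inv_mul_eq_div]
  rw [besselLiouville, besselI, hsum, rpow_add hy, div_rpow hy.le zero_le_two, sqrt_eq_rpow]
  field_simp

theorem hasDerivAt_besselLiouville (ν : ℝ) {x : ℝ} (hx : 0 < x) :
    HasDerivAt (besselLiouville ν) (besselLiouvilleDeriv ν x) x := by
  have hd := hasInfiniteRadius_of_succ (besselCoeff_succ ν)
  refine (hasDerivAt_rpow_mul (ν + 1 / 2) hx
    (hasDerivAt_comp_sq_div_four hd.hasDerivAt x)).congr_deriv ?_
  rw [besselLiouvilleDeriv]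
  ring

theorem hasDerivAt_besselLiouvilleDeriv (ν : ℝ) {x : ℝ} (hx : 0 < x) :
    HasDerivAt (besselLiouvilleDeriv ν)
      ((1 + (ν ^ 2 - 1 / 4) / x ^ 2) * besselLiouville ν x) x := by
  have hd := hasInfiniteRadius_of_succ (besselCoeff_succ ν)
  have hg := hasDerivAt_comp_sq_div_four hd.hasDerivAt x
  have hg' := hasDerivAt_comp_sq_div_four (hasInfiniteRadius_derivCoeff hd).hasDerivAt x
  have hode := powerSum_ode_of_succ (besselCoeff_succ ν) (x ^ 2 / 4)
  set g := powerSum (besselCoeff ν)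
  set g' := powerSum (derivCoeff (besselCoeff ν))
  set g'' := powerSum (derivCoeff (derivCoeff (besselCoeff ν)))
  have hψ : HasDerivAt (fun y => (ν + 1 / 2) / y * g (y ^ 2 / 4) + y / 2 * g' (y ^ 2 / 4))
      (-(ν + 1 / 2) / x ^ 2 * g (x ^ 2 / 4) + (2 * ν + 3) / 4 * g' (x ^ 2 / 4)
        + x ^ 2 / 4 * g'' (x ^ 2 / 4)) x := by
    have h1 := ((hasDerivAt_inv hx.ne').const_mul (ν + 1 / 2)).fun_mul hg
    have h2 := ((hasDerivAt_id x).div_const 2).fun_mul hg'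
    refine (h1.fun_add h2).congr_deriv ?_
    simp only [id]
    field_simp
    ring
  refine (hasDerivAt_rpow_mul (ν + 1 / 2) hx hψ).congr_deriv ?_
  rw [besselLiouville]
  field_simp
  linear_combination 16 * x ^ 2 * hode

theorem hasDerivAt_mul_exp_quadratic {f : ℝ → ℝ} {f' x : ℝ} (A p r : ℝ)
    (hf : HasDerivAt f f' x) :
    HasDerivAt (fun y => A * f y * exp (p * y ^ 2 + r))
      (A * (f' + 2 * p * x * f x) * exp (p * x ^ 2 + r)) x := by
  have hE : HasDerivAt (fun y => exp (p * y ^ 2 + r)) (exp (p * x ^ 2 + r) * (p * (2 * x))) x := by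
    simpa using (((hasDerivAt_pow 2 x).const_mul p).add_const r).exp
  refine ((hf.const_mul A).fun_mul hE).congr_deriv ?_
  ring

theorem hasDerivAt_comp_const_mul {w : ℝ → ℝ} {w' c x : ℝ} (hw : HasDerivAt w w' (c * x)) :
    HasDerivAt (fun y => w (c * y)) (c * w') x := by
  have := hw.comp x ((hasDerivAt_id' x).const_mul c)
  rwa [mul_one, mul_comm] at this

theorem hasDerivAt_const_mul_sqrt {c : ℝ → ℝ} {s p t : ℝ} (K : ℝ)
    (hc : HasDerivAt c (2 * s * p * c t) t) (hct : 0 < c t) :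
    HasDerivAt (fun τ => K * √(c τ)) (s * p * (K * √(c t))) t := by
  refine ((hc.sqrt hct.ne').const_mul K).congr_deriv ?_
  have := sq_sqrt hct.le
  field_simp
  linear_combination (-(K * s * p)) * this

section Ansatz

variable {w w' : ℝ → ℝ} {κ : ℝ}

theorem deriv_deriv_eq_of_eventuallyEq_profile
    (hw : ∀ x > 0, HasDerivAt w (w' x) x)
    (hw' : ∀ x > 0, HasDerivAt w' ((1 + κ / x ^ 2) * w x) x)
    {A c p r q : ℝ} (hc : 0 < c) (hq : 0 < q) {f : ℝ → ℝ}
    (hf : f =ᶠ[𝓝 q] fun y => A * w (c * y) * exp (p * y ^ 2 + r)) :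
    deriv (deriv f) q = A * ((c ^ 2 + κ / q ^ 2 + 2 * p + 4 * p ^ 2 * q ^ 2) * w (c * q)
      + 4 * p * q * c * w' (c * q)) * exp (p * q ^ 2 + r) := by
  have hcq : 0 < c * q := mul_pos hc hq
  have hf' : deriv f =ᶠ[𝓝 q]
      fun y => A * (c * w' (c * y) + 2 * p * y * w (c * y)) * exp (p * y ^ 2 + r) := by
    filter_upwards [hf.deriv, Ioi_mem_nhds hq] with x hx hx0
    rw [hx, (hasDerivAt_mul_exp_quadratic A p r
      (hasDerivAt_comp_const_mul (hw _ (mul_pos hc hx0)))).deriv]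
  have h1 := (hasDerivAt_comp_const_mul (hw' _ hcq)).const_mul c
  have h2 := ((hasDerivAt_id' q).const_mul (2 * p)).fun_mul (hasDerivAt_comp_const_mul (hw _ hcq))
  rw [hf'.deriv_eq, (hasDerivAt_mul_exp_quadratic A p r (h1.fun_add h2)).deriv]
  field_simp
  ring

theorem ansatz_solves_dualHeat
    (hw : ∀ x > 0, HasDerivAt w (w' x) x)
    (hw' : ∀ x > 0, HasDerivAt w' ((1 + κ / x ^ 2) * w x) x)
    {a c p r : ℝ → ℝ} {p' s B t q : ℝ}
    (ha : HasDerivAt a (s * p t * a t) t) (hc : HasDerivAt c (2 * s * p t * c t) t)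
    (hp : HasDerivAt p p' t) (hp' : s * p' = 2 * s ^ 2 * p t ^ 2 - B)
    (hr : HasDerivAt r (s * c t ^ 2 / 2) t) (hct : 0 < c t) (hq : 0 < q) {η : ℝ → ℝ → ℝ}
    (hη : ∀ᶠ τ in 𝓝 t, ∀ᶠ x in 𝓝 q, η τ x = a τ * w (c τ * x) * exp (p τ * x ^ 2 + r τ)) :
    -s * deriv (fun τ => η τ q) t =
      -(s ^ 2 / 2) * deriv (deriv (η t)) q + (s ^ 2 * κ / 2 / q ^ 2 + B * q ^ 2) * η t q := by
  have hηt : η t =ᶠ[𝓝 q] fun x => a t * w (c t * x) * exp (p t * x ^ 2 + r t) :=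
    hη.self_of_nhds
  have hηq : (fun τ => η τ q) =ᶠ[𝓝 t] fun τ => a τ * w (c τ * q) * exp (p τ * q ^ 2 + r τ) :=
    hη.mono fun τ h => h.self_of_nhds
  have hG : HasDerivAt (fun τ => a τ * w (c τ * q) * exp (p τ * q ^ 2 + r τ))
      ((s * p t * a t * w (c t * q) + a t * (w' (c t * q) * (2 * s * p t * c t * q)))
        * exp (p t * q ^ 2 + r t) + a t * w (c t * q) * (exp (p t * q ^ 2 + r t)
          * (p' * q ^ 2 + s * c t ^ 2 / 2))) t :=
    (ha.fun_mul ((hw _ (mul_pos hct hq)).comp t (hc.mul_const q))).fun_mul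
      ((hp.mul_const (q ^ 2)).add hr).exp
  rw [hηq.deriv_eq, hG.deriv, deriv_deriv_eq_of_eventuallyEq_profile hw hw' hct hq hηt,
    hηt.self_of_nhds]
  field_simp
  linear_combination (-2 * a t * q ^ 4 * w (c t * q)) * hp'

end Ansatz

noncomputable def besselArgScale (lam α z₀ τ : ℝ) : ℝ :=
  4 * lam * z₀ * exp (lam * τ / 2) / (α ^ 2 * (exp (lam * τ) - 1))

noncomputable def gaussCoeff (lam α τ : ℝ) : ℝ :=
  lam / α ^ 2 - 2 * lam * exp (lam * τ) / (α ^ 2 * (exp (lam * τ) - 1))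

noncomputable def gaussOffset (lam α z₀ τ : ℝ) : ℝ :=
  -(2 * lam / α ^ 2) * (z₀ ^ 2 / (exp (lam * τ) - 1))

theorem exp_mul_eq_sq (lam τ : ℝ) : exp (lam * τ) = exp (lam * τ / 2) ^ 2 := by
  rw [← exp_nat_mul]
  ring_nf

theorem exp_mul_sub_one_ne_zero {lam τ : ℝ} (hlam : lam ≠ 0) (hτ : 0 < τ) :
    exp (lam * τ) - 1 ≠ 0 :=
  sub_ne_zero.2 fun h => mul_ne_zero hlam hτ.ne' (exp_eq_one_iff _ |>.1 h)

theorem div_exp_mul_sub_one_pos {lam τ : ℝ} (hlam : lam ≠ 0) (hτ : 0 < τ) :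
    0 < lam / (exp (lam * τ) - 1) := by
  rcases hlam.lt_or_gt with h | h
  · exact div_pos_of_neg_of_neg h (sub_neg.2 (exp_lt_one_iff.2 (mul_neg_of_neg_of_pos h hτ)))
  · exact div_pos h (sub_pos.2 (one_lt_exp_iff.2 (mul_pos h hτ)))

theorem hasDerivAt_exp_mul_half (lam τ : ℝ) :
    HasDerivAt (fun y => exp (lam * y / 2)) (lam / 2 * exp (lam * τ / 2)) τ :=
  ((((hasDerivAt_id' τ).const_mul lam).div_const 2).exp).congr_deriv (by ring)

theorem hasDerivAt_exp_mul_sub_one (lam τ : ℝ) :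
    HasDerivAt (fun y => exp (lam * y) - 1) (lam * exp (lam * τ / 2) ^ 2) τ := by
  rw [← exp_mul_eq_sq]
  exact ((((hasDerivAt_id' τ).const_mul lam).exp).sub_const 1).congr_deriv (by ring)

section Coefficients

variable {lam α τ : ℝ}

theorem hasDerivAt_besselArgScale (z₀ : ℝ) (hα : α ≠ 0) (h : exp (lam * τ) - 1 ≠ 0) :
    HasDerivAt (besselArgScale lam α z₀)
      (2 * (α / 2) ^ 2 * gaussCoeff lam α τ * besselArgScale lam α z₀ τ) τ := by
  refine (((hasDerivAt_exp_mul_half lam τ).const_mul (4 * lam * z₀)).div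
    ((hasDerivAt_exp_mul_sub_one lam τ).const_mul (α ^ 2))
    (mul_ne_zero (pow_ne_zero 2 hα) h)).congr_deriv ?_
  rw [gaussCoeff, besselArgScale]
  rw [exp_mul_eq_sq] at h ⊢
  field_simp

theorem hasDerivAt_gaussCoeff (hα : α ≠ 0) (h : exp (lam * τ) - 1 ≠ 0) :
    HasDerivAt (gaussCoeff lam α)
      (α ^ 2 / 2 * gaussCoeff lam α τ ^ 2 - lam ^ 2 / (2 * α ^ 2)) τ := by
  have hexp := ((hasDerivAt_id' τ).const_mul lam).exp
  refine (((hexp.const_mul (2 * lam)).div ((hexp.sub_const 1).const_mul (α ^ 2))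
    (mul_ne_zero (pow_ne_zero 2 hα) h)).const_sub (lam / α ^ 2)).congr_deriv ?_
  rw [gaussCoeff]
  rw [exp_mul_eq_sq] at h ⊢
  field_simp
  ring

theorem hasDerivAt_gaussOffset (z₀ : ℝ) (h : exp (lam * τ) - 1 ≠ 0) :
    HasDerivAt (gaussOffset lam α z₀)
      ((α / 2) ^ 2 * besselArgScale lam α z₀ τ ^ 2 / 2) τ := by
  refine ((((hasDerivAt_exp_mul_sub_one lam τ).inv h).const_mul (z₀ ^ 2)).const_mul
    (-(2 * lam / α ^ 2))).congr_deriv ?_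
  rw [besselArgScale]
  rw [exp_mul_eq_sq] at h ⊢
  field_simp
  ring

end Coefficients

theorem besselArgScale_pos {lam α z₀ τ : ℝ} (hα : α ≠ 0) (hlam : lam ≠ 0) (hz₀ : 0 < z₀)
    (hτ : 0 < τ) :
    0 < besselArgScale lam α z₀ τ := by
  have hE := exp_mul_sub_one_ne_zero hlam hτ
  have := div_exp_mul_sub_one_pos hlam hτ
  rw [besselArgScale, show 4 * lam * z₀ * exp (lam * τ / 2) / (α ^ 2 * (exp (lam * τ) - 1))
    = 4 * z₀ * exp (lam * τ / 2) / α ^ 2 * (lam / (exp (lam * τ) - 1)) by field_simp]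
  positivity

theorem etaStar_eq_ansatz {α lam ν z₀ τ x : ℝ} (hα : α ≠ 0) (hlam : lam ≠ 0) (hz₀ : 0 < z₀)
    (hτ : 0 < τ) (hx : 0 < x) :
    (4 * lam / (α ^ 2 * z₀ ^ ν)) * (exp (lam * τ / 2) / (exp (lam * τ) - 1)) *
        besselI ν (4 * lam * z₀ * exp (lam * τ / 2) * x / (α ^ 2 * (exp (lam * τ) - 1))) *
        x ^ ((1 : ℝ) / 2) *
        exp (lam * x ^ 2 / α ^ 2 -
          (2 * lam / α ^ 2) * ((z₀ ^ 2 + exp (lam * τ) * x ^ 2) / (exp (lam * τ) - 1)))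
      = (2 ^ ν * z₀ ^ (ν + 1))⁻¹ * √(besselArgScale lam α z₀ τ) *
        besselLiouville ν (besselArgScale lam α z₀ τ * x) *
        exp (gaussCoeff lam α τ * x ^ 2 + gaussOffset lam α z₀ τ) := by
  have hc := besselArgScale_pos hα hlam hz₀ hτ
  have hE := exp_mul_sub_one_ne_zero hlam hτ
  have hz₀ν : 0 < z₀ ^ ν := rpow_pos_of_pos hz₀ ν
  have hpre : 4 * lam / (α ^ 2 * z₀ ^ ν) * (exp (lam * τ / 2) / (exp (lam * τ) - 1))
      = besselArgScale lam α z₀ τ / (z₀ * z₀ ^ ν) := by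
    rw [besselArgScale]
    field_simp
  have harg : 4 * lam * z₀ * exp (lam * τ / 2) * x / (α ^ 2 * (exp (lam * τ) - 1))
      = besselArgScale lam α z₀ τ * x := by
    rw [besselArgScale]
    ring
  have hexp : lam * x ^ 2 / α ^ 2 -
      (2 * lam / α ^ 2) * ((z₀ ^ 2 + exp (lam * τ) * x ^ 2) / (exp (lam * τ) - 1))
      = gaussCoeff lam α τ * x ^ 2 + gaussOffset lam α z₀ τ := by
    rw [gaussCoeff, gaussOffset]
    field_simp
    ring
  rw [hpre, harg, hexp, besselLiouville_eq (mul_pos hc hx), sqrt_mul hc.le, ← sqrt_eq_rpow,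
    rpow_add_one hz₀.ne']
  field_simp
  rw [sq_sqrt hc.le]
  ring

/-- The function `η*` built from the Bessel-density quotient satisfies the dual heat
equation with potential `V(t,q) = A/q² + Bq²`. -/
theorem etaStar_bessel_solves_dual_heat (α lam δ ν z₀ θ A B : ℝ) (hα : 0 < α) (hlam : lam ≠ 0)
    (hν : ν = δ / 2 - 1) (hz₀ : 0 < z₀) (hθ : θ = α / 2)
    (hA : A = α ^ 4 * (δ - 1) * (δ - 3) / 128) (hB : B = lam ^ 2 / 8)
    (ηs : ℝ → ℝ → ℝ)
    (hηs : ∀ t q, ηs t q =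
      (4 * lam / (α ^ 2 * z₀ ^ ν)) * (Real.exp (lam * t / 2) / (Real.exp (lam * t) - 1)) *
        besselI ν (4 * lam * z₀ * Real.exp (lam * t / 2) * q / (α ^ 2 * (Real.exp (lam * t) - 1))) *
        q ^ ((1 : ℝ) / 2) *
        Real.exp (lam * q ^ 2 / α ^ 2 -
          (2 * lam / α ^ 2) * ((z₀ ^ 2 + Real.exp (lam * t) * q ^ 2) / (Real.exp (lam * t) - 1))))
    (t q : ℝ) (ht : 0 < t) (hq : 0 < q) :
    -(θ ^ 2) * deriv (fun τ => ηs τ q) t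
      = -(θ ^ 4 / 2) * deriv (deriv (ηs t)) q + (A / q ^ 2 + B * q ^ 2) * ηs t q := by
  have hE := exp_mul_sub_one_ne_zero hlam ht
  have hct := besselArgScale_pos hα.ne' hlam hz₀ ht
  have hc := hasDerivAt_besselArgScale z₀ hα.ne' hE
  have hη : ∀ᶠ τ in 𝓝 t, ∀ᶠ x in 𝓝 q, ηs τ x = (2 ^ ν * z₀ ^ (ν + 1))⁻¹ *
      √(besselArgScale lam α z₀ τ) * besselLiouville ν (besselArgScale lam α z₀ τ * x) *
      exp (gaussCoeff lam α τ * x ^ 2 + gaussOffset lam α z₀ τ) := by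
    filter_upwards [Ioi_mem_nhds ht] with τ hτ
    filter_upwards [Ioi_mem_nhds hq] with x hx
    rw [hηs]
    exact etaStar_eq_ansatz hα.ne' hlam hz₀ hτ hx
  have hp' : (α / 2) ^ 2 * (α ^ 2 / 2 * gaussCoeff lam α t ^ 2 - lam ^ 2 / (2 * α ^ 2))
      = 2 * ((α / 2) ^ 2) ^ 2 * gaussCoeff lam α t ^ 2 - lam ^ 2 / 8 := by
    field_simp
    ring
  have key := ansatz_solves_dualHeat (κ := ν ^ 2 - 1 / 4)
    (fun x hx => hasDerivAt_besselLiouville ν hx)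
    (fun x hx => hasDerivAt_besselLiouvilleDeriv ν hx) (hasDerivAt_const_mul_sqrt _ hc hct) hc
    (hasDerivAt_gaussCoeff hα.ne' hE) hp' (hasDerivAt_gaussOffset z₀ hE) hct hq hη
  subst hθ hA hB hν
  linear_combination key
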